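/- For a₀ ≤ a < b < c ≤ b₀, if γ^α(F,a,c) < ∞, then γ^α(F,a,c) = γ^α(F,a,b) + γ^α(F,b,c). -/

import Mathlib

/-!
Concatenating subdivisions of `[a, b]` and `[b, c]` of mesh `≤ δ` gives one of `[a, c]` whose
σ-sum is the sum of theirs, so each coarse-grained mass `γ_δ` is subadditive. Conversely, cutting a
subdivision of `[a, c]` at `b` changes its σ-sum only through the two steps adjacent to `b`; by
uniform continuity of `w` on `[a, c]` their cost tends to `0` with `δ`, so `γ_δ` is superadditive
up to an error that vanishes as `δ → 0`.
-/

open Set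
open scoped ENNReal

structure Subdivision (a b : ℝ) where
  k : ℕ
  t : ℕ → ℝ
  first : t 0 = a
  last : t k = b
  mono : ∀ i < k, t i < t (i + 1)

def Subdivision.MeshLE {a b : ℝ} (P : Subdivision a b) (δ : ℝ) : Prop :=
  ∀ i < P.k, P.t (i + 1) - P.t i ≤ δ

noncomputable def sigmaSum {n : ℕ} (α : ℝ) (w : ℝ → EuclideanSpace ℝ (Fin n))
    {a b : ℝ} (P : Subdivision a b) : ℝ :=
  (∑ i ∈ Finset.range P.k, ‖w (P.t (i + 1)) - w (P.t i)‖ ^ α) / Real.Gamma (α + 1)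

noncomputable def gammaDelta {n : ℕ} (α : ℝ) (w : ℝ → EuclideanSpace ℝ (Fin n))
    (a b δ : ℝ) : ℝ≥0∞ :=
  ⨅ (P : Subdivision a b) (_ : P.MeshLE δ), ENNReal.ofReal (sigmaSum α w P)

noncomputable def massFn {n : ℕ} (α : ℝ) (w : ℝ → EuclideanSpace ℝ (Fin n))
    (a b : ℝ) : ℝ≥0∞ :=
  ⨆ (δ : ℝ) (_ : 0 < δ), gammaDelta α w a b δ

theorem Nat.exists_lt_and_not_succ {p : ℕ → Prop} {n : ℕ} (h0 : p 0) (hn : ¬p n) :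
    ∃ i < n, p i ∧ ¬p (i + 1) := by
  induction n with
  | zero => exact absurd h0 hn
  | succ n ih =>
    by_cases hpn : p n
    · exact ⟨n, n.lt_succ_self, hpn, hn⟩
    · obtain ⟨i, hi, hpi⟩ := ih hpn
      exact ⟨i, by omega, hpi⟩

namespace Subdivision

variable {a b c x y δ η : ℝ}

theorem strictMonoOn_t (P : Subdivision a b) : StrictMonoOn P.t (Iic P.k) :=
  strictMonoOn_Iic_of_lt_succ P.mono

theorem t_mem_Icc (P : Subdivision a b) {i : ℕ} (hi : i ≤ P.k) : P.t i ∈ Icc a b := by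
  have hmono := P.strictMonoOn_t.monotoneOn
  constructor
  · simpa [P.first] using hmono (a := 0) (by simp) hi (Nat.zero_le i)
  · simpa [P.last] using hmono hi (by simp) hi

def sum {M : Type*} [AddCommMonoid M] (P : Subdivision a b) (φ : ℝ → ℝ → M) : M :=
  ∑ i ∈ Finset.range P.k, φ (P.t i) (P.t (i + 1))

def single (hxy : x < y) : Subdivision x y where
  k := 1
  t i := if i = 0 then x else y
  first := rfl
  last := rfl
  mono i hi := by
    obtain rfl : i = 0 := by omega
    simpa using hxy

theorem sum_single {M : Type*} [AddCommMonoid M] (hxy : x < y) (φ : ℝ → ℝ → M) :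
    (single hxy).sum φ = φ x y := by
  simp [sum, single]

theorem meshLE_single (hxy : x < y) (h : y - x ≤ δ) : (single hxy).MeshLE δ := by
  intro i (hi : i < 1)
  obtain rfl : i = 0 := by omega
  simpa [single] using h

def take (R : Subdivision a c) (j : ℕ) (hj : j ≤ R.k) : Subdivision a (R.t j) where
  k := j
  t := R.t
  first := R.first
  last := rfl
  mono i hi := R.mono i (by omega)

def drop (R : Subdivision a c) (j : ℕ) (hj : j ≤ R.k) : Subdivision (R.t j) c where
  k := R.k - j
  t i := R.t (j + i)
  first := rfl
  last := by simp only [Nat.add_sub_cancel' hj, R.last]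
  mono i hi := R.mono (j + i) (by omega)

theorem MeshLE.take {R : Subdivision a c} (hR : R.MeshLE δ) (j : ℕ) (hj : j ≤ R.k) :
    (R.take j hj).MeshLE δ :=
  fun i hi => hR i (by simp only [Subdivision.take] at hi; omega)

theorem MeshLE.drop {R : Subdivision a c} (hR : R.MeshLE δ) (j : ℕ) (hj : j ≤ R.k) :
    (R.drop j hj).MeshLE δ :=
  fun i hi => hR (j + i) (by simp only [Subdivision.drop] at hi; omega)

theorem sum_take_add_sum_drop {M : Type*} [AddCommMonoid M] (R : Subdivision a c) (j : ℕ)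
    (hj : j ≤ R.k) (φ : ℝ → ℝ → M) : (R.take j hj).sum φ + (R.drop j hj).sum φ = R.sum φ := by
  conv_rhs => rw [sum, ← Nat.add_sub_cancel' hj, Finset.sum_range_add]
  rfl

theorem sum_take_le_sum_take {R : Subdivision a c} {φ : ℝ → ℝ → ℝ} (hφ : ∀ x y, 0 ≤ φ x y)
    {j j' : ℕ} (hj : j ≤ R.k) (hj' : j' ≤ R.k) (hjj' : j ≤ j') :
    (R.take j hj).sum φ ≤ (R.take j' hj').sum φ :=
  Finset.sum_le_sum_of_subset_of_nonneg (Finset.range_subset_range.mpr hjj') fun _ _ _ => hφ _ _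

def appendNodes (P : Subdivision a b) (Q : Subdivision b c) (i : ℕ) : ℝ :=
  if i ≤ P.k then P.t i else Q.t (i - P.k)

theorem appendNodes_of_le (P : Subdivision a b) (Q : Subdivision b c) {i : ℕ} (hi : i ≤ P.k) :
    appendNodes P Q i = P.t i :=
  if_pos hi

theorem appendNodes_add (P : Subdivision a b) (Q : Subdivision b c) (i : ℕ) :
    appendNodes P Q (P.k + i) = Q.t i := by
  unfold appendNodes
  split_ifs with h
  · obtain rfl : i = 0 := by omega
    simp [P.last, Q.first]
  · simp

theorem forall_appendNodes_steps (P : Subdivision a b) (Q : Subdivision b c) {r : ℝ → ℝ → Prop}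
    (hP : ∀ i < P.k, r (P.t i) (P.t (i + 1))) (hQ : ∀ i < Q.k, r (Q.t i) (Q.t (i + 1))) :
    ∀ i < P.k + Q.k, r (appendNodes P Q i) (appendNodes P Q (i + 1)) := by
  intro i hi
  rcases lt_or_ge i P.k with hiP | hiP
  · rw [appendNodes_of_le P Q hiP.le, appendNodes_of_le P Q hiP]
    exact hP i hiP
  · obtain ⟨j, rfl⟩ := Nat.exists_eq_add_of_le hiP
    rw [add_assoc, appendNodes_add, appendNodes_add]
    exact hQ j (by omega)

def append (P : Subdivision a b) (Q : Subdivision b c) : Subdivision a c where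
  k := P.k + Q.k
  t := appendNodes P Q
  first := by rw [appendNodes_of_le P Q (Nat.zero_le _), P.first]
  last := by rw [appendNodes_add, Q.last]
  mono := forall_appendNodes_steps P Q P.mono Q.mono

theorem MeshLE.append {P : Subdivision a b} {Q : Subdivision b c} (hP : P.MeshLE δ)
    (hQ : Q.MeshLE δ) : (P.append Q).MeshLE δ :=
  forall_appendNodes_steps P Q (r := fun x y => y - x ≤ δ) hP hQ

theorem sum_append {M : Type*} [AddCommMonoid M] (P : Subdivision a b) (Q : Subdivision b c)
    (φ : ℝ → ℝ → M) : (P.append Q).sum φ = P.sum φ + Q.sum φ := by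
  simp only [sum, append]
  rw [Finset.sum_range_add]
  congr 1
  · refine Finset.sum_congr rfl fun i hi => ?_
    have hi := Finset.mem_range.mp hi
    rw [appendNodes_of_le P Q hi.le, appendNodes_of_le P Q hi]
  · simp only [add_assoc, appendNodes_add]


theorem exists_split_sum_le (R : Subdivision a c) (hb : b ∈ Ioo a c) (hR : R.MeshLE δ)
    {φ : ℝ → ℝ → ℝ} (hφ₀ : ∀ x y, 0 ≤ φ x y)
    (hφ : ∀ x ∈ Icc a c, ∀ y ∈ Icc a c, x ≤ y → y - x ≤ δ → φ x y ≤ η) :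
    ∃ (P : Subdivision a b) (Q : Subdivision b c), P.MeshLE δ ∧ Q.MeshLE δ ∧
      P.sum φ + Q.sum φ ≤ R.sum φ + 2 * η := by
  obtain ⟨j, hjk, hj, hbj⟩ := Nat.exists_lt_and_not_succ (p := fun i => R.t i < b) (n := R.k)
    (by simpa [R.first] using hb.1) (by simpa [R.last] using hb.2.le)
  obtain ⟨j', hj'k, hj', hbj'⟩ := Nat.exists_lt_and_not_succ (p := fun i => R.t i ≤ b) (n := R.k)
    (by simpa [R.first] using hb.1.le) (by simpa [R.last] using hb.2)
  simp only [not_lt, not_le] at hbj hbj'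
  -- `t j < b ≤ t (j + 1)` and `t j' ≤ b < t (j' + 1)`: so `j' = j` unless `b = t (j + 1)`.
  have hjj' : j ≤ j' + 1 :=
    (R.strictMonoOn_t.lt_iff_lt (by simp; omega) (by simp; omega)).mp (hj.trans hbj') |>.le
  have hstep : b - R.t j ≤ δ := by linarith [hR j hjk]
  have hstep' : R.t (j' + 1) - b ≤ δ := by linarith [hR j' hj'k]
  have hb_mem : b ∈ Icc a c := Ioo_subset_Icc_self hb
  let P := (R.take j hjk.le).append (single hj)
  let Q := (single hbj').append (R.drop (j' + 1) hj'k)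
  refine ⟨P, Q, (hR.take j _).append (meshLE_single hj hstep),
    (meshLE_single hbj' hstep').append (hR.drop _ _), ?_⟩
  have hfirst : φ (R.t j) b ≤ η := hφ _ (R.t_mem_Icc hjk.le) _ hb_mem hj.le hstep
  have hlast : φ b (R.t (j' + 1)) ≤ η := hφ _ hb_mem _ (R.t_mem_Icc hj'k) hbj'.le hstep'
  have htake := sum_take_le_sum_take hφ₀ hjk.le hj'k hjj'
  have hsplit := R.sum_take_add_sum_drop (j' + 1) hj'k φ
  simp only [P, Q, sum_append, sum_single]
  linarith

end Subdivision

theorem ContinuousOn.exists_pos_forall_norm_sub_rpow_le {E : Type*} [SeminormedAddCommGroup E]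
    {w : ℝ → E} {a c α η : ℝ} (hw : ContinuousOn w (Icc a c)) (hα : 0 < α) (hη : 0 < η) :
    ∃ δ > 0, ∀ x ∈ Icc a c, ∀ y ∈ Icc a c, x ≤ y → y - x ≤ δ → ‖w y - w x‖ ^ α ≤ η := by
  obtain ⟨δ, hδ, hwδ⟩ := Metric.uniformContinuousOn_iff.mp
    (isCompact_Icc.uniformContinuousOn_of_continuous hw) (η ^ α⁻¹) (by positivity)
  refine ⟨δ / 2, by positivity, fun x hx y hy hxy hyx => ?_⟩
  have hdist : dist y x < δ := by rw [Real.dist_eq, abs_of_nonneg (by linarith)]; linarith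
  calc ‖w y - w x‖ ^ α ≤ (η ^ α⁻¹) ^ α := by
        gcongr
        rw [← dist_eq_norm]
        exact (hwδ y hy x hx hdist).le
    _ = η := Real.rpow_inv_rpow hη.le hα.ne'

section Mass

variable {n : ℕ} {α : ℝ} {w : ℝ → EuclideanSpace ℝ (Fin n)}

theorem sigmaSum_eq_sum_div {a b : ℝ} (P : Subdivision a b) :
    sigmaSum α w P = P.sum (fun x y => ‖w y - w x‖ ^ α) / Real.Gamma (α + 1) :=
  rfl

theorem gammaDelta_antitone (a b : ℝ) : Antitone (gammaDelta α w a b) :=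
  fun _ _ hδ => le_iInf₂ fun P hP => iInf₂_le P fun i hi => (hP i hi).trans hδ

theorem gammaDelta_le_add (a b c δ : ℝ) :
    gammaDelta α w a c δ ≤ gammaDelta α w a b δ + gammaDelta α w b c δ := by
  refine ENNReal.le_iInf₂_add_iInf₂ fun P hP Q hQ => ?_
  calc gammaDelta α w a c δ ≤ ENNReal.ofReal (sigmaSum α w (P.append Q)) :=
        iInf₂_le (P.append Q) (hP.append hQ)
    _ ≤ ENNReal.ofReal (sigmaSum α w P) + ENNReal.ofReal (sigmaSum α w Q) := by
        rw [sigmaSum_eq_sum_div, Subdivision.sum_append, add_div]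
        exact ENNReal.ofReal_add_le

theorem add_gammaDelta_le (hα : 0 < α) {a b c δ η : ℝ} (hb : b ∈ Ioo a c)
    (hw : ∀ x ∈ Icc a c, ∀ y ∈ Icc a c, x ≤ y → y - x ≤ δ → ‖w y - w x‖ ^ α ≤ η) :
    gammaDelta α w a b δ + gammaDelta α w b c δ ≤
      gammaDelta α w a c δ + ENNReal.ofReal (2 * η / Real.Gamma (α + 1)) := by
  have hΓ : 0 < Real.Gamma (α + 1) := Real.Gamma_pos_of_pos (by linarith)
  have hσ₀ {a b : ℝ} (P : Subdivision a b) : 0 ≤ sigmaSum α w P :=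
    div_nonneg (Finset.sum_nonneg fun _ _ => by positivity) hΓ.le
  conv_rhs => simp only [gammaDelta, ENNReal.iInf_add]
  refine le_iInf₂ fun R hR => ?_
  obtain ⟨P, Q, hP, hQ, hsum⟩ :=
    R.exists_split_sum_le hb hR (fun _ _ => by positivity) hw
  calc _ ≤ ENNReal.ofReal (sigmaSum α w P) + ENNReal.ofReal (sigmaSum α w Q) :=
        add_le_add (iInf₂_le P hP) (iInf₂_le Q hQ)
    _ = ENNReal.ofReal (sigmaSum α w P + sigmaSum α w Q) :=
        (ENNReal.ofReal_add (hσ₀ P) (hσ₀ Q)).symm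
    _ ≤ ENNReal.ofReal (sigmaSum α w R + 2 * η / Real.Gamma (α + 1)) := by
        refine ENNReal.ofReal_le_ofReal ?_
        simpa only [sigmaSum_eq_sum_div, ← add_div] using div_le_div_of_nonneg_right hsum hΓ.le
    _ ≤ _ := ENNReal.ofReal_add_le

theorem massFn_le_add (a b c : ℝ) : massFn α w a c ≤ massFn α w a b + massFn α w b c :=
  iSup₂_le fun δ hδ => (gammaDelta_le_add a b c δ).trans
    (add_le_add (le_iSup₂ (f := fun δ _ => gammaDelta α w a b δ) δ hδ)
      (le_iSup₂ (f := fun δ _ => gammaDelta α w b c δ) δ hδ))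

theorem add_massFn_le (hα : 0 < α) {a b c : ℝ} (hw : ContinuousOn w (Icc a c)) (hab : a < b)
    (hbc : b < c) : massFn α w a b + massFn α w b c ≤ massFn α w a c := by
  have hΓ : 0 < Real.Gamma (α + 1) := Real.Gamma_pos_of_pos (by linarith)
  refine ENNReal.le_of_forall_pos_le_add fun ε hε _ => ?_
  obtain ⟨δ₀, hδ₀, hwδ₀⟩ :=
    hw.exists_pos_forall_norm_sub_rpow_le hα (η := ε * Real.Gamma (α + 1) / 2) (by positivity)
  refine ENNReal.biSup_add_biSup_le' ⟨δ₀, hδ₀⟩ ⟨δ₀, hδ₀⟩ fun δ₁ hδ₁ δ₂ hδ₂ => ?_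
  set δ := min (min δ₁ δ₂) δ₀
  have hδ : 0 < δ := lt_min (lt_min hδ₁ hδ₂) hδ₀
  have hwδ : ∀ x ∈ Icc a c, ∀ y ∈ Icc a c, x ≤ y → y - x ≤ δ →
      ‖w y - w x‖ ^ α ≤ ε * Real.Gamma (α + 1) / 2 :=
    fun x hx y hy hxy hyx => hwδ₀ x hx y hy hxy (hyx.trans (min_le_right _ _))
  calc gammaDelta α w a b δ₁ + gammaDelta α w b c δ₂
      ≤ gammaDelta α w a b δ + gammaDelta α w b c δ :=
        add_le_add (gammaDelta_antitone a b ((min_le_left _ _).trans (min_le_left _ _)))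
          (gammaDelta_antitone b c ((min_le_left _ _).trans (min_le_right _ _)))
    _ ≤ gammaDelta α w a c δ + ENNReal.ofReal (2 * (ε * Real.Gamma (α + 1) / 2) /
          Real.Gamma (α + 1)) := add_gammaDelta_le hα ⟨hab, hbc⟩ hwδ
    _ = gammaDelta α w a c δ + ε := by
        rw [mul_div_cancel₀ _ two_ne_zero, mul_div_cancel_right₀ _ hΓ.ne',
          ENNReal.ofReal_coe_nnreal]
    _ ≤ massFn α w a c + ε :=
        add_le_add_left (le_iSup₂ (f := fun δ _ => gammaDelta α w a c δ) δ hδ) _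

end Mass

theorem massFn_additive_general {n : ℕ} {a₀ b₀ : ℝ}
    (w : ℝ → EuclideanSpace ℝ (Fin n))
    (hw : ContinuousOn w (Icc a₀ b₀))
    {α : ℝ} (hα : α ∈ Icc (1 : ℝ) (n : ℝ))
    {a b c : ℝ} (ha : a₀ ≤ a) (hab : a < b) (hbc : b < c) (hc : c ≤ b₀) :
    massFn α w a c = massFn α w a b + massFn α w b c :=
  le_antisymm (massFn_le_add a b c)
    (add_massFn_le (zero_lt_one.trans_le hα.1) (hw.mono (Icc_subset_Icc ha hc)) hab hbc)

/-- For a₀ ≤ a < b < c ≤ b₀, if γ^α(F,a,c) < ∞, then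
γ^α(F,a,c) = γ^α(F,a,b) + γ^α(F,b,c). -/
theorem massFn_additive {n : ℕ} (hn : 1 ≤ n) {a₀ b₀ : ℝ}
    (w : ℝ → EuclideanSpace ℝ (Fin n))
    (hw : ContinuousOn w (Icc a₀ b₀)) (hinj : InjOn w (Icc a₀ b₀))
    {α : ℝ} (hα : α ∈ Icc (1 : ℝ) (n : ℝ))
    {a b c : ℝ} (ha : a₀ ≤ a) (hab : a < b) (hbc : b < c) (hc : c ≤ b₀)
    (hfin : massFn α w a c ≠ ⊤) :
    massFn α w a c = massFn α w a b + massFn α w b c :=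
  massFn_additive_general w hw hα ha hab hbc hc
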